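/- Let R be a commutative ring with unity having some non-trivial idempotent and such that the clean graph Cl(R) is not a complete graph. Then the strong resolving graph of Cl(R) is the disjoint union of the graph G and the complete graph on the vertex set {(0,u) : u ∈ U(R)} (a copy of K_{|U(R)|}), where G has vertex set {(e,u) : e a nonzero idempotent of R, u ∈ U(R)} and two vertices (e,u), (f,v) of G are adjacent if and only if ef ≠ 0 and uv ≠ 1. Moreover, G is a connected graph, and V(Cl(R)) equals the vertex set of the strong resolving graph of Cl(R). -/

import Mathlib

variable {V : Type*}

/-- In a graph `G`, `u` is maximally distant from `v` if `d(v,w) ≤ d(u,v)` for every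
neighbour `w` of `u`. -/
def IsMaxDistFrom (G : SimpleGraph V) (u v : V) : Prop :=
  ∀ w ∈ G.neighborSet u, G.dist v w ≤ G.dist u v

/-- `u` and `v` are mutually maximally distant in `G`. -/
def IsMMD (G : SimpleGraph V) (u v : V) : Prop :=
  IsMaxDistFrom G u v ∧ IsMaxDistFrom G v u

/-- The boundary of a graph: the set of vertices that are mutually maximally distant
from some other vertex.  This is the vertex set of the strong resolving graph. -/
def graphBoundary (G : SimpleGraph V) : Set V :=
  {u | ∃ v, u ≠ v ∧ IsMMD G u v}

/-- The strong resolving graph, realised on the full vertex set (vertices outside the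
boundary are isolated): two distinct vertices are adjacent iff they are mutually
maximally distant. -/
def srGraph (G : SimpleGraph V) : SimpleGraph V where
  Adj u v := u ≠ v ∧ IsMMD G u v
  symm := ⟨fun u v h => ⟨h.1.symm, h.2.2, h.2.1⟩⟩
  loopless := ⟨fun u h => h.1 rfl⟩

/-- The independence number of a graph: the largest cardinality of a finite set of
pairwise non-adjacent vertices. -/
noncomputable def indNum (G : SimpleGraph V) : ℕ :=
  sSup {n | ∃ s : Finset V, ((s : Set V).Pairwise fun a b => ¬ G.Adj a b) ∧ s.card = n}

/-- `S` is a strong resolving set of `G`: every pair of distinct vertices `u, v` is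
strongly resolved by some `w ∈ S`, i.e. `v` lies on a shortest `u`-`w` path or `u` lies
on a shortest `v`-`w` path. -/
def IsStrongResolvingSet (G : SimpleGraph V) (S : Set V) : Prop :=
  ∀ u v : V, u ≠ v → ∃ w ∈ S,
    G.dist u w = G.dist u v + G.dist v w ∨ G.dist v w = G.dist v u + G.dist u w

/-- The strong metric dimension of a graph: the smallest cardinality of a (finite)
strong resolving set. -/
noncomputable def sdim (G : SimpleGraph V) : ℕ :=
  sInf {n | ∃ S : Finset V, IsStrongResolvingSet G (S : Set V) ∧ S.card = n}

/-- Vertices of the clean graph: pairs `(e, u)` with `e` an idempotent and `u` a unit. -/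
abbrev CleanVtx (R : Type*) [CommRing R] : Type _ := {e : R // IsIdempotentElem e} × Rˣ

/-- The clean graph `Cl(R)` of a commutative ring `R`: distinct vertices `(e,u)`, `(f,v)`
are adjacent iff `e * f = 0` or `u * v = 1`. -/
def cleanGraph (R : Type*) [CommRing R] : SimpleGraph (CleanVtx R) where
  Adj x y := x ≠ y ∧ ((x.1 : R) * (y.1 : R) = 0 ∨ (x.2 : R) * (y.2 : R) = 1)
  symm := by
    constructor
    rintro x y ⟨hxy, h | h⟩
    · exact ⟨hxy.symm, Or.inl (by rwa [mul_comm])⟩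
    · exact ⟨hxy.symm, Or.inr (by rwa [mul_comm])⟩
  loopless := ⟨fun x h => h.1 rfl⟩

/-- The vertex set of `Cl₂(R)`: clean vertices `(e,u)` with `e ≠ 0`. -/
def clean2Set (R : Type*) [CommRing R] : Set (CleanVtx R) := {x | (x.1 : R) ≠ 0}

/-- `Cl₂(R)`, the subgraph of `Cl(R)` induced on the vertices `(e,u)` with `e ≠ 0`. -/
def clean2Graph (R : Type*) [CommRing R] : SimpleGraph (clean2Set R) :=
  SimpleGraph.induce (clean2Set R) (cleanGraph R)

/-- `U''(R)`: the set of units `u` with `u² ≠ 1`. -/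
def uSecond (R : Type*) [CommRing R] : Set Rˣ := {u | (u : R) * (u : R) ≠ 1}

/-- `|Id(R)*|`: the number of non-trivial idempotents of `R`. -/
noncomputable def idStarNum (R : Type*) [CommRing R] : ℕ :=
  {e : R | IsIdempotentElem e ∧ e ≠ 0 ∧ e ≠ 1}.ncard

/-- `|Id⊥(R)*|`: the maximum cardinality of a set of nonzero pairwise orthogonal
idempotents of `R`. -/
noncomputable def orthIdemNum (R : Type*) [CommRing R] : ℕ :=
  sSup {n | ∃ s : Finset R, (∀ e ∈ s, IsIdempotentElem e ∧ e ≠ 0) ∧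
    ((s : Set R).Pairwise fun e f => e * f = 0) ∧ s.card = n}

/-- The graph `G` of the paper: vertices are the pairs `(e,u)` with `e` a nonzero
idempotent and `u` a unit; `(e,u)` and `(f,v)` are adjacent iff `ef ≠ 0` and `uv ≠ 1`. -/
def graphG (R : Type*) [CommRing R] : SimpleGraph (clean2Set R) where
  Adj x y := x ≠ y ∧ (x.1.1 : R) * (y.1.1 : R) ≠ 0 ∧ (x.1.2 : R) * (y.1.2 : R) ≠ 1
  symm := by
    constructor
    rintro x y ⟨h1, h2, h3⟩
    exact ⟨h1.symm, by rwa [mul_comm], by rwa [mul_comm]⟩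
  loopless := ⟨fun x h => h.1 rfl⟩

section CleanAux
variable {R : Type*} [CommRing R]

lemma aux_exists_unit (hU : ∃ a b : Rˣ, (a : R) * (b : R) ≠ 1) (u : Rˣ) :
    ∃ t : Rˣ, t ≠ u ∧ t ≠ u⁻¹ := by
  by_contra h
  push_neg at h
  have hu1 : u = 1 := by
    rcases (em ((1:Rˣ) = u)) with h1 | h1
    · exact h1.symm
    · have := h 1 h1
      simpa using this.symm
  obtain ⟨a, b, hab⟩ := hU
  have ha : a = 1 := by
    rcases em (a = u) with h1 | h1
    · rw [h1, hu1]
    · have := h a h1; rw [hu1] at this; simpa using this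
  have hb : b = 1 := by
    rcases em (b = u) with h1 | h1
    · rw [h1, hu1]
    · have := h b h1; rw [hu1] at this; simpa using this
  rw [ha, hb] at hab
  simp at hab

lemma aux_unit_mul_ne_one {u t : Rˣ} (h : t ≠ u⁻¹) : (u : R) * (t : R) ≠ 1 := by
  intro hc
  apply h
  have huv : u * t = 1 := Units.ext (by push_cast; exact hc)
  exact eq_inv_of_mul_eq_one_right huv

lemma aux_unit_mul_ne_one' {u t : Rˣ} (h : t ≠ u⁻¹) : (t : R) * (u : R) ≠ 1 := by
  rw [mul_comm]; exact aux_unit_mul_ne_one h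

/-- the hub vertex `(0,1)` -/
def cgHub (R : Type*) [CommRing R] : CleanVtx R := (⟨0, by simp [IsIdempotentElem]⟩, 1)

lemma cg_adj_hub {x : CleanVtx R} (hx : (x.1 : R) ≠ 0) : (cleanGraph R).Adj x (cgHub R) := by
  refine ⟨fun h => hx ?_, Or.inl (by show (x.1 : R) * (0 : R) = 0; rw [mul_zero])⟩
  rw [h]; rfl

lemma cg_dist_adj {x y : CleanVtx R} (h : (cleanGraph R).Adj x y) :
    (cleanGraph R).dist x y = 1 := SimpleGraph.dist_eq_one_iff_adj.2 h

lemma cg_not_adj {x y : CleanVtx R} (hxy : x ≠ y) (h : ¬ (cleanGraph R).Adj x y) :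
    (x.1 : R) * (y.1 : R) ≠ 0 ∧ (x.2 : R) * (y.2 : R) ≠ 1 := by
  exact ⟨fun hc => h ⟨hxy, Or.inl hc⟩, fun hc => h ⟨hxy, Or.inr hc⟩⟩

lemma cg_dist_two {x y : CleanVtx R} (hxy : x ≠ y) (h : ¬ (cleanGraph R).Adj x y) :
    (cleanGraph R).dist x y = 2 := by
  obtain ⟨hef, -⟩ := cg_not_adj hxy h
  have hx : (x.1 : R) ≠ 0 := left_ne_zero_of_mul hef
  have hy : (y.1 : R) ≠ 0 := right_ne_zero_of_mul hef
  have h1 : (cleanGraph R).Adj x (cgHub R) := cg_adj_hub hx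
  have h2 : (cleanGraph R).Adj (cgHub R) y := ((cleanGraph R).adj_symm (cg_adj_hub hy))
  have hle : (cleanGraph R).dist x y ≤ 2 := by
    have := SimpleGraph.dist_le
      (SimpleGraph.Walk.cons h1 (SimpleGraph.Walk.cons h2 SimpleGraph.Walk.nil))
    simpa using this
  have h0 : (cleanGraph R).dist x y ≠ 0 := by
    intro hc
    rcases SimpleGraph.dist_eq_zero_iff_eq_or_not_reachable.1 hc with hc1 | hc1
    · exact hxy hc1
    · exact hc1 (SimpleGraph.Walk.cons h1
        (SimpleGraph.Walk.cons h2 SimpleGraph.Walk.nil)).reachable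
  have h1' : (cleanGraph R).dist x y ≠ 1 := fun hc =>
    h (SimpleGraph.dist_eq_one_iff_adj.1 hc)
  omega

lemma cg_dist_le_two (x y : CleanVtx R) : (cleanGraph R).dist x y ≤ 2 := by
  rcases em (x = y) with h | h
  · simp [h, SimpleGraph.dist_self]
  rcases em ((cleanGraph R).Adj x y) with ha | ha
  · rw [cg_dist_adj ha]; omega
  · rw [cg_dist_two h ha]

lemma cg_mmd_of_not_adj {x y : CleanVtx R} (hxy : x ≠ y) (h : ¬ (cleanGraph R).Adj x y) :
    IsMMD (cleanGraph R) x y := by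
  constructor <;> intro w hw
  · rw [cg_dist_two hxy h]; exact cg_dist_le_two y w
  · rw [cg_dist_two (Ne.symm hxy) (fun hc => h ((cleanGraph R).adj_symm hc))]
    exact cg_dist_le_two x w

lemma cg_mmd_zero {x y : CleanVtx R} (hx : (x.1 : R) = 0) (hy : (y.1 : R) = 0)
    (hxy : x ≠ y) : IsMMD (cleanGraph R) x y := by
  have hadj : (cleanGraph R).Adj x y := ⟨hxy, Or.inl (by rw [hx, zero_mul])⟩
  constructor <;> intro w hw
  · rw [cg_dist_adj hadj]
    rcases em (y = w) with h | h
    · simp [← h, SimpleGraph.dist_self]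
    · rw [cg_dist_adj ⟨h, Or.inl (by rw [hy, zero_mul])⟩]
  · rw [cg_dist_adj ((cleanGraph R).adj_symm hadj)]
    rcases em (x = w) with h | h
    · simp [← h, SimpleGraph.dist_self]
    · rw [cg_dist_adj ⟨h, Or.inl (by rw [hx, zero_mul])⟩]

lemma cg_not_mmd_adj (hU : ∃ a b : Rˣ, (a : R) * (b : R) ≠ 1)
    (e0 : R) (h0 : IsIdempotentElem e0) (h0z : e0 ≠ 0) (h0o : e0 ≠ 1)
    {x y : CleanVtx R} (hadj : (cleanGraph R).Adj x y) (hf : (y.1 : R) ≠ 0) :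
    ¬ IsMMD (cleanGraph R) x y := by
  rintro ⟨hm1, hm2⟩
  have key : ∃ w : CleanVtx R,
      ((cleanGraph R).Adj x w ∧ w ≠ y ∧ ¬ (cleanGraph R).Adj y w) ∨
      ((cleanGraph R).Adj y w ∧ w ≠ x ∧ ¬ (cleanGraph R).Adj x w) := by
    rcases em ((x.1 : R) * (y.1 : R) = 0) with hef | hef
    · -- Case A : ef = 0, witness (f, t) with t ∉ {v, v⁻¹}
      obtain ⟨t, ht1, ht2⟩ := aux_exists_unit hU y.2
      refine ⟨(y.1, t), Or.inl ⟨⟨?_, Or.inl hef⟩, ?_, ?_⟩⟩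
      · intro hxw
        have h1 : (x.1 : R) = (y.1 : R) := by rw [hxw]
        rw [h1, y.1.2.eq] at hef
        exact hf hef
      · exact fun hwy => ht1 (congrArg Prod.snd hwy)
      · rintro ⟨-, hc | hc⟩
        · have hc2 : (y.1 : R) * (y.1 : R) = 0 := hc
          rw [y.1.2.eq] at hc2
          exact hf hc2
        · exact aux_unit_mul_ne_one ht2 hc
    · -- Case B : ef ≠ 0, so uv = 1
      have huv : (x.2 : R) * (y.2 : R) = 1 := hadj.2.resolve_left hef
      have hv : y.2 = x.2⁻¹ :=
        eq_inv_of_mul_eq_one_right (Units.ext (by push_cast; exact huv))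
      rcases em (x.2 = x.2⁻¹) with hu | hu
      · -- u² = 1, so v = u and e ≠ f
        have hvu : y.2 = x.2 := by rw [hv, ← hu]
        have hexy : (x.1 : R) ≠ (y.1 : R) := by
          intro h1
          exact hadj.1 (Prod.ext (Subtype.ext h1) hvu.symm)
        obtain ⟨t, ht1, ht2⟩ := aux_exists_unit hU x.2
        rcases em ((y.1 : R) * (1 - (x.1 : R)) = 0) with hfe | hfe
        · -- f(1-e) = 0 ⇒ e(1-f) = e - f ≠ 0 : witness on y's side
          have h3 : (y.1 : R) - (y.1 : R) * (x.1 : R) = 0 := by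
            rw [← mul_one_sub]; exact hfe
          have h4 : (y.1 : R) = (y.1 : R) * (x.1 : R) := sub_eq_zero.mp h3
          have hef2 : (x.1 : R) * (1 - (y.1 : R)) ≠ 0 := by
            have h2 : (x.1 : R) * (1 - (y.1 : R)) = (x.1 : R) - (y.1 : R) := by
              calc (x.1 : R) * (1 - (y.1 : R))
                  = (x.1 : R) - (y.1 : R) * (x.1 : R) := by ring
                _ = (x.1 : R) - (y.1 : R) := by rw [← h4]
            rw [h2]
            exact sub_ne_zero.mpr hexy
          refine ⟨(⟨1 - (y.1 : R), y.1.2.one_sub⟩, t), Or.inr ⟨⟨?_, Or.inl ?_⟩, ?_, ?_⟩⟩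
          · exact fun hyw => ht1 (((congrArg Prod.snd hyw).symm).trans hvu)
          · show (y.1 : R) * (1 - (y.1 : R)) = 0
            rw [mul_one_sub, y.1.2.eq, sub_self]
          · exact fun hwx => ht1 (congrArg Prod.snd hwx)
          · rintro ⟨-, hc | hc⟩
            · exact hef2 hc
            · exact aux_unit_mul_ne_one ht2 hc
        · -- f(1-e) ≠ 0 : witness (1-e, t) on x's side
          refine ⟨(⟨1 - (x.1 : R), x.1.2.one_sub⟩, t), Or.inl ⟨⟨?_, Or.inl ?_⟩, ?_, ?_⟩⟩
          · exact fun hxw => ht1 (congrArg Prod.snd hxw).symm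
          · show (x.1 : R) * (1 - (x.1 : R)) = 0
            rw [mul_one_sub, x.1.2.eq, sub_self]
          · exact fun hwy => ht1 ((congrArg Prod.snd hwy).trans hvu)
          · rintro ⟨-, hc | hc⟩
            · exact hfe hc
            · refine aux_unit_mul_ne_one (u := y.2) ?_ hc
              rw [hv, inv_inv]
              exact ht1
      · -- u ≠ u⁻¹ : witness (g, u⁻¹) with fg ≠ 0, g ≠ f
        rcases em ((y.1 : R) = 1) with hf1 | hf1
        · -- f = 1, take g = e0
          refine ⟨(⟨e0, h0⟩, x.2⁻¹), Or.inl ⟨⟨?_, Or.inr (Units.mul_inv x.2)⟩, ?_, ?_⟩⟩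
          · exact fun hxw => hu (congrArg Prod.snd hxw)
          · intro hwy
            have h1 : e0 = (y.1 : R) := congrArg (fun z : CleanVtx R => (z.1 : R)) hwy
            rw [hf1] at h1
            exact h0o h1
          · rintro ⟨-, hc | hc⟩
            · have hc2 : (y.1 : R) * e0 = 0 := hc
              rw [hf1, one_mul] at hc2
              exact h0z hc2
            · refine aux_unit_mul_ne_one (u := y.2) ?_ hc
              rw [hv, inv_inv]
              exact fun h => hu h.symm
        · -- f ≠ 1, take g = 1
          refine ⟨(⟨1, IsIdempotentElem.one⟩, x.2⁻¹),
            Or.inl ⟨⟨?_, Or.inr (Units.mul_inv x.2)⟩, ?_, ?_⟩⟩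
          · exact fun hxw => hu (congrArg Prod.snd hxw)
          · intro hwy
            have h1 : (1 : R) = (y.1 : R) := congrArg (fun z : CleanVtx R => (z.1 : R)) hwy
            exact hf1 h1.symm
          · rintro ⟨-, hc | hc⟩
            · have hc2 : (y.1 : R) * 1 = 0 := hc
              rw [mul_one] at hc2
              exact hf hc2
            · refine aux_unit_mul_ne_one (u := y.2) ?_ hc
              rw [hv, inv_inv]
              exact fun h => hu h.symm
  obtain ⟨w, ⟨ha, hne, hna⟩ | ⟨ha, hne, hna⟩⟩ := key
  · have h1 := hm1 w ((SimpleGraph.mem_neighborSet _ _ _).2 ha)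
    rw [cg_dist_adj hadj, cg_dist_two (Ne.symm hne) hna] at h1
    omega
  · have h1 := hm2 w ((SimpleGraph.mem_neighborSet _ _ _).2 ha)
    rw [cg_dist_adj ((cleanGraph R).adj_symm hadj), cg_dist_two (Ne.symm hne) hna] at h1
    omega

lemma cg_adj_mmd_zero (hU : ∃ a b : Rˣ, (a : R) * (b : R) ≠ 1)
    (e0 : R) (h0 : IsIdempotentElem e0) (h0z : e0 ≠ 0) (h0o : e0 ≠ 1)
    {x y : CleanVtx R} (hadj : (cleanGraph R).Adj x y) (hmmd : IsMMD (cleanGraph R) x y) :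
    (x.1 : R) = 0 ∧ (y.1 : R) = 0 := by
  rcases em ((y.1 : R) = 0) with hy | hy
  · rcases em ((x.1 : R) = 0) with hx | hx
    · exact ⟨hx, hy⟩
    · exact absurd ⟨hmmd.2, hmmd.1⟩
        (cg_not_mmd_adj hU e0 h0 h0z h0o ((cleanGraph R).adj_symm hadj) hx)
  · exact absurd hmmd (cg_not_mmd_adj hU e0 h0 h0z h0o hadj hy)

lemma gG_adj {a b : clean2Set R} (h2 : a.1.2 ≠ b.1.2)
    (h1 : (a.1.1 : R) * (b.1.1 : R) ≠ 0) (h3 : (a.1.2 : R) * (b.1.2 : R) ≠ 1) :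
    (graphG R).Adj a b :=
  ⟨fun h => h2 (by rw [h]), h1, h3⟩

lemma gG_reach_fiber (hU : ∃ a b : Rˣ, (a : R) * (b : R) ≠ 1)
    (p : {e : R // IsIdempotentElem e}) (hp : (p : R) ≠ 0) (u v : Rˣ) :
    (graphG R).Reachable ⟨(p, u), hp⟩ ⟨(p, v), hp⟩ := by
  have hpp : (p : R) * (p : R) ≠ 0 := by rw [p.2.eq]; exact hp
  rcases em (u = v) with h | h
  · rw [h]
  rcases em ((u : R) * (v : R) = 1) with h1 | h1
  · have hv : v = u⁻¹ :=
      eq_inv_of_mul_eq_one_right (Units.ext (by push_cast; exact h1))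
    obtain ⟨t, ht1, ht2⟩ := aux_exists_unit hU u
    have e1 : (graphG R).Adj ⟨(p, u), hp⟩ ⟨(p, t), hp⟩ :=
      gG_adj ht1.symm hpp (aux_unit_mul_ne_one ht2)
    have e2 : (graphG R).Adj ⟨(p, t), hp⟩ ⟨(p, v), hp⟩ := by
      refine gG_adj ?_ hpp ?_
      · show t ≠ v
        rw [hv]; exact ht2
      · show (t : R) * (v : R) ≠ 1
        refine aux_unit_mul_ne_one' (u := v) ?_
        rw [hv, inv_inv]; exact ht1
    exact e1.reachable.trans e2.reachable
  · exact (gG_adj h hpp h1).reachable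

lemma gG_reach (hU : ∃ a b : Rˣ, (a : R) * (b : R) ≠ 1)
    (a b : clean2Set R) (hef : (a.1.1 : R) * (b.1.1 : R) ≠ 0) :
    (graphG R).Reachable a b := by
  obtain ⟨⟨p, u⟩, ha⟩ := a
  obtain ⟨⟨q, v⟩, hb⟩ := b
  have hq : ((⟨(q, v), hb⟩ : clean2Set R).1.1 : R) ≠ 0 := hb
  obtain ⟨t, ht1, ht2⟩ := aux_exists_unit hU u
  have e1 : (graphG R).Adj ⟨(p, u), ha⟩ ⟨(q, t), hq⟩ :=
    gG_adj ht1.symm hef (aux_unit_mul_ne_one ht2)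
  exact e1.reachable.trans (gG_reach_fiber hU q hq t v)

lemma gG_connected (hid : ∃ e : R, IsIdempotentElem e ∧ e ≠ 0 ∧ e ≠ 1)
    (hU : ∃ a b : Rˣ, (a : R) * (b : R) ≠ 1) : (graphG R).Connected := by
  obtain ⟨e, he, hez, -⟩ := hid
  have : Nontrivial R := nontrivial_of_ne e 0 hez
  have h1 : ((1 : R)) ≠ 0 := one_ne_zero
  rw [SimpleGraph.connected_iff]
  refine ⟨?_, ⟨⟨(⟨1, IsIdempotentElem.one⟩, 1), h1⟩⟩⟩
  intro a b
  refine (gG_reach hU a ⟨(⟨1, IsIdempotentElem.one⟩, 1), h1⟩ ?_).trans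
    (gG_reach hU ⟨(⟨1, IsIdempotentElem.one⟩, 1), h1⟩ b ?_)
  · show (a.1.1 : R) * (1 : R) ≠ 0
    rw [mul_one]; exact a.2
  · show (1 : R) * (b.1.1 : R) ≠ 0
    rw [one_mul]; exact b.2

end CleanAux

theorem statement_6 (R : Type*) [CommRing R]
    (hid : ∃ e : R, IsIdempotentElem e ∧ e ≠ 0 ∧ e ≠ 1)
    (hnc : cleanGraph R ≠ ⊤) :
    (∀ x : CleanVtx R, x ∈ graphBoundary (cleanGraph R)) ∧
    (∀ x y : CleanVtx R, x ≠ y →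
      ((srGraph (cleanGraph R)).Adj x y ↔
        ((x.1 : R) = 0 ∧ (y.1 : R) = 0) ∨
        ((x.1 : R) ≠ 0 ∧ (y.1 : R) ≠ 0 ∧ (x.1 : R) * (y.1 : R) ≠ 0 ∧
          (x.2 : R) * (y.2 : R) ≠ 1))) ∧
    (graphG R).Connected := by
  have hU : ∃ a b : Rˣ, (a : R) * (b : R) ≠ 1 := by
    by_contra h
    push_neg at h
    apply hnc
    ext x y
    show (x ≠ y ∧ _) ↔ x ≠ y
    constructor
    · rintro ⟨hxy, -⟩; exact hxy
    · intro hxy; exact ⟨hxy, Or.inr (h x.2 y.2)⟩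
  obtain ⟨e0, h0, h0z, h0o⟩ := hid
  refine ⟨?_, ?_, gG_connected ⟨e0, h0, h0z, h0o⟩ hU⟩
  · -- every vertex is in the boundary
    intro x
    obtain ⟨t, ht1, ht2⟩ := aux_exists_unit hU x.2
    have hne : x ≠ (x.1, t) := fun h => ht1 (congrArg Prod.snd h).symm
    rcases em ((x.1 : R) = 0) with hx | hx
    · exact ⟨(x.1, t), hne, cg_mmd_zero hx hx hne⟩
    · refine ⟨(x.1, t), hne, cg_mmd_of_not_adj hne ?_⟩
      rintro ⟨-, hc | hc⟩
      · have hc2 : (x.1 : R) = 0 := by rw [← x.1.2.eq]; exact hc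
        exact hx hc2
      · exact aux_unit_mul_ne_one ht2 hc
  · -- description of the strong resolving graph
    intro x y hxy
    constructor
    · rintro ⟨-, hmmd⟩
      rcases em ((cleanGraph R).Adj x y) with hadj | hadj
      · exact Or.inl (cg_adj_mmd_zero hU e0 h0 h0z h0o hadj hmmd)
      · obtain ⟨hef, huv⟩ := cg_not_adj hxy hadj
        exact Or.inr ⟨left_ne_zero_of_mul hef, right_ne_zero_of_mul hef, hef, huv⟩
    · rintro (⟨hx, hy⟩ | ⟨-, -, hef, huv⟩)
      · exact ⟨hxy, cg_mmd_zero hx hy hxy⟩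
      · refine ⟨hxy, cg_mmd_of_not_adj hxy ?_⟩
        rintro ⟨-, hc | hc⟩
        · exact hef hc
        · exact huv hc
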